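/- Assume (A1)–(A3). Define Z_n := f̂(Φ_n), Ξ_1 = Z_1, and Ξ_{n+1} = Ξ_n + (1/(n+1))( A Ξ_n − (1/n)(I+A) Z_{n+1} ) for n ≥ 1. Suppose λ = −ϱ₀ + u·i is an eigenvalue of A with 0 < ϱ₀ < 1/2, let v ∈ ℂ^d be a nonzero left eigenvector (vᵀ A = λ vᵀ), and suppose Σ_Δ v ≠ 0. Then limsup_{n→∞} n^{2ϱ₀} E[|vᵀ Ξ_n|²] < ∞. -/

import Mathlib

open MeasureTheory ProbabilityTheory Filter Matrix

noncomputable section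

attribute [local instance] Matrix.normedAddCommGroup

/-- One-step transition operator of a Markov kernel acting on real-valued functions:
`(Pop P g)(z) = ∫ g(y) P(z, dy)`. -/
def Pop {Z : Type*} [MeasurableSpace Z] (P : Kernel Z Z) (g : Z → ℝ) (z : Z) : ℝ :=
  ∫ y, g y ∂(P z)

/-- `n`-step transition operator `Pⁿ`. -/
def Pn {Z : Type*} [MeasurableSpace Z] (P : Kernel Z Z) : ℕ → (Z → ℝ) → Z → ℝ
  | 0 => fun g => g
  | n + 1 => fun g => Pop P (Pn P n g)

/-- `g ∈ L∞^V` : `|g|` is bounded by a constant multiple of `V`. -/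
def BddV {Z : Type*} (V g : Z → ℝ) : Prop :=
  ∃ C : ℝ, ∀ z, |g z| ≤ C * V z

/-- `V`-uniform ergodicity of the kernel `P` with invariant probability measure `π`:
there are `ρ ∈ (0,1)` and `B < ∞` such that `|Pⁿg(z) − π(g)| ≤ B ‖g‖_V ρⁿ V(z)`. -/
def VUniformlyErgodic {Z : Type*} [MeasurableSpace Z] (P : Kernel Z Z) (π : Measure Z)
    (V : Z → ℝ) : Prop :=
  ∃ ρ B : ℝ, ρ ∈ Set.Ioo (0 : ℝ) 1 ∧ 0 ≤ B ∧
    ∀ (g : Z → ℝ) (C : ℝ), Measurable g → (∀ z, |g z| ≤ C * V z) →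
      ∀ (n : ℕ) (z : Z), |Pn P n g z - ∫ x, g x ∂π| ≤ B * C * ρ ^ n * V z

/-- Cross-moment matrix `E[X Yᵀ]`. -/
def crossMat {Ω : Type*} [MeasurableSpace Ω] (μ : Measure Ω) {d : ℕ}
    (X Y : Ω → Fin d → ℝ) : Matrix (Fin d) (Fin d) ℝ :=
  Matrix.of fun i j => ∫ ω, X ω i * Y ω j ∂μ

/-- Covariance-type matrix `E[X Xᵀ]`. -/
def covMat {Ω : Type*} [MeasurableSpace Ω] (μ : Measure Ω) {d : ℕ}
    (X : Ω → Fin d → ℝ) : Matrix (Fin d) (Fin d) ℝ :=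
  crossMat μ X X

/-- `∫∫ (g(z') − Pg(z)) (h(z') − Ph(z))ᵀ P(z, dz') π(dz)`. -/
def steadyCross {Z : Type*} [MeasurableSpace Z] (P : Kernel Z Z) (π : Measure Z) {d : ℕ}
    (g h : Z → Fin d → ℝ) : Matrix (Fin d) (Fin d) ℝ :=
  Matrix.of fun i j =>
    ∫ z, ∫ z', (g z' i - Pop P (fun y => g y i) z) * (h z' j - Pop P (fun y => h y j) z)
      ∂(P z) ∂π

/-- The asymptotic covariance matrix
`Σ_Δ = ∫∫ (f̂(z') − Pf̂(z))(f̂(z') − Pf̂(z))ᵀ P(z, dz') π(dz)`. -/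
def SigmaDelta {Z : Type*} [MeasurableSpace Z] (P : Kernel Z Z) (π : Measure Z) {d : ℕ}
    (fhat : Z → Fin d → ℝ) : Matrix (Fin d) (Fin d) ℝ :=
  steadyCross P π fhat fhat

/-- `E_π[Δ^m Ẑᵀ] = ∫∫ (f̂(z') − Pf̂(z)) f̂̂(z')ᵀ P(z, dz') π(dz)`. -/
def martCrossZ {Z : Type*} [MeasurableSpace Z] (P : Kernel Z Z) (π : Measure Z) {d : ℕ}
    (fhat fhh : Z → Fin d → ℝ) : Matrix (Fin d) (Fin d) ℝ :=
  Matrix.of fun i j =>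
    ∫ z, ∫ z', (fhat z' i - Pop P (fun y => fhat y i) z) * fhh z' j ∂(P z) ∂π

/-- All eigenvalues (over `ℂ`) of the real matrix `A` have real part `< c`. -/
def EigReLT {d : ℕ} (A : Matrix (Fin d) (Fin d) ℝ) (c : ℝ) : Prop :=
  ∀ (l : ℂ) (v : Fin d → ℂ), v ≠ 0 → (A.map Complex.ofReal).mulVec v = l • v → l.re < c

/-- A real square matrix is Hurwitz if all of its eigenvalues have negative real part. -/
def IsHurwitz {d : ℕ} (A : Matrix (Fin d) (Fin d) ℝ) : Prop :=
  EigReLT A 0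

/-!
Write `Wₙ = vᵀ Ξₙ` and `Sₖ = vᵀ f̂(Φₖ)`. Since `v` is a left eigenvector of `A`, the recursion for
`Ξ` projects to `Wₙ₊₁ = (1 + λ/(n+1)) Wₙ - (1 + λ)/(n (n+1)) Sₙ₊₁`, `W₁ = S₁`, so
`Wₙ = ∑_{k ≤ n} (∏_{k < j ≤ n} (1 + λ/j)) βₖ Sₖ` with `β₁ = 1` and `βₖ = O(k⁻²)`.
From `|1 + z| ≤ exp (Re z + |z|²/2)` and `∑_{k < j ≤ n} 1/j ≥ log ((n+1)/(k+1))`, the products are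
`O(((k+1)/(n+1))^ϱ₀)`, and `∑ (k+1)^ϱ₀ |βₖ| < ∞` because `ϱ₀ < 1`. Finally the Markov property and
`V`-uniform ergodicity bound `E |Sₖ|²` uniformly in `k`, so Minkowski's inequality in `L²` gives
`‖Wₙ‖₂ = O((n+1)^(-ϱ₀))`.
-/

open scoped ENNReal NNReal

section TransitionOperator

variable {Z : Type*} [MeasurableSpace Z] {P : Kernel Z Z}

lemma Pop_const_mul (c : ℝ) (g : Z → ℝ) (z : Z) :
    Pop P (fun y => c * g y) z = c * Pop P g z :=
  integral_const_mul c _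

lemma Pn_succ' (g : Z → ℝ) (n : ℕ) : Pn P (n + 1) g = Pn P n (Pop P g) := by
  induction n with
  | zero => rfl
  | succ n ih => exact congrArg (Pop P) ih

/-- `Pⁿ g` and `g = P⁰ g` both lie within `B ‖g‖_V V` of `π(g)`. -/
lemma VUniformlyErgodic.exists_Pn_le {π : Measure Z} {V : Z → ℝ}
    (herg : VUniformlyErgodic P π V) :
    ∃ B : ℝ, ∀ (g : Z → ℝ) (C : ℝ), Measurable g → (∀ z, |g z| ≤ C * V z) →
      ∀ n z, Pn P n g z ≤ g z + 2 * B * C * V z := by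
  obtain ⟨ρ, B, hρ, hB, herg⟩ := herg
  refine ⟨B, fun g C hg hgV n z => ?_⟩
  have hBCV : 0 ≤ B * C * V z := by
    rw [mul_assoc]; exact mul_nonneg hB ((abs_nonneg _).trans (hgV z))
  have hρn : ρ ^ n ≤ 1 := pow_le_one₀ hρ.1.le hρ.2.le
  have hn := abs_le.1 (herg g C hg hgV n z)
  have h0 := abs_le.1 (herg g C hg hgV 0 z)
  simp only [Pn, pow_zero, mul_one] at h0
  nlinarith [mul_le_mul_of_nonneg_left hρn hBCV]

variable [IsMarkovKernel P]

lemma measurable_Pop {g : Z → ℝ} (hg : Measurable g) : Measurable (Pop P g) :=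
  (hg.comp measurable_snd).stronglyMeasurable.integral_kernel_prod_right'.measurable

lemma abs_Pop_le {g : Z → ℝ} {c : ℝ} (hg : ∀ z, |g z| ≤ c) (z : Z) : |Pop P g z| ≤ c := by
  simpa [Pop] using norm_integral_le_of_norm_le_const (μ := P z)
    (ae_of_all _ fun y => (Real.norm_eq_abs (g y)).trans_le (hg y))

end TransitionOperator

lemma eLpNorm_two_le_of_integral_min_sq_le {Ω : Type*} [MeasurableSpace Ω] {μ : Measure Ω}
    [IsFiniteMeasure μ] {f : Ω → ℝ} (hf : Measurable f) {K : ℝ}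
    (hK : ∀ M : ℕ, ∫ ω, min (f ω ^ 2) M ∂μ ≤ K) :
    eLpNorm f 2 μ ≤ ENNReal.ofReal √K := by
  have htrunc_meas (M : ℕ) : Measurable fun ω => min (f ω ^ 2) (M : ℝ) :=
    (hf.pow_const 2).min measurable_const
  have htrunc_nonneg (M : ℕ) (ω : Ω) : 0 ≤ min (f ω ^ 2) (M : ℝ) :=
    le_min (sq_nonneg _) M.cast_nonneg
  have hsup (ω : Ω) : ‖f ω‖ₑ ^ (2 : ℝ) = ⨆ M : ℕ, ENNReal.ofReal (min (f ω ^ 2) M) := by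
    rw [← ofReal_norm, ENNReal.ofReal_rpow_of_nonneg (norm_nonneg _) zero_le_two]
    refine le_antisymm ?_ (iSup_le fun M => ENNReal.ofReal_le_ofReal
      ((min_le_left _ _).trans (by simp)))
    obtain ⟨M, hM⟩ := exists_nat_ge (f ω ^ 2)
    refine le_iSup_of_le M ?_
    rw [min_eq_left hM]
    simp
  have hlint : ∫⁻ ω, ‖f ω‖ₑ ^ (2 : ℝ) ∂μ ≤ ENNReal.ofReal K := by
    simp_rw [hsup]
    rw [lintegral_iSup (f := fun M ω => ENNReal.ofReal (min (f ω ^ 2) M))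
      (fun M => ENNReal.measurable_ofReal.comp (htrunc_meas M))
      fun M M' hMM' ω => ENNReal.ofReal_le_ofReal (min_le_min_left _ (Nat.cast_le.2 hMM'))]
    refine iSup_le fun M => ?_
    have hint : Integrable (fun ω => min (f ω ^ 2) (M : ℝ)) μ :=
      (integrable_const (M : ℝ)).mono' (htrunc_meas M).aestronglyMeasurable
        (ae_of_all _ fun ω => by
          rw [Real.norm_eq_abs, abs_of_nonneg (htrunc_nonneg M ω)]; exact min_le_right _ _)
    rw [← ofReal_integral_eq_lintegral_ofReal hint (ae_of_all _ (htrunc_nonneg M))]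
    exact ENNReal.ofReal_le_ofReal (hK M)
  rw [eLpNorm_eq_lintegral_rpow_enorm_toReal two_ne_zero ENNReal.ofNat_ne_top, Real.sqrt_eq_rpow,
    ← ENNReal.ofReal_rpow_of_nonneg ?_ (by norm_num)]
  · exact ENNReal.rpow_le_rpow (by simpa using hlint) (by norm_num)
  · exact (integral_nonneg fun ω => htrunc_nonneg 0 ω).trans (hK 0)

section MarkovChain

variable {Z : Type*} [MeasurableSpace Z] {P : Kernel Z Z}
  {Ω : Type*} {m0 : MeasurableSpace Ω} {μ : Measure Ω} {F : Filtration ℕ m0} {Φ : ℕ → Ω → Z}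

lemma integral_comp_succ_eq_integral_Pop [IsFiniteMeasure μ]
    (hMarkov : ∀ (g : Z → ℝ), Measurable g → (∀ z, |g z| ≤ 1) → ∀ n,
      μ[(fun ω => g (Φ (n + 1) ω)) | F n] =ᵐ[μ] fun ω => Pop P g (Φ n ω))
    {g : Z → ℝ} {c : ℝ} (hg : Measurable g) (hgc : ∀ z, |g z| ≤ c) (n : ℕ) :
    ∫ ω, g (Φ (n + 1) ω) ∂μ = ∫ ω, Pop P g (Φ n ω) ∂μ := by
  -- `hMarkov` only covers `|g| ≤ 1`, so apply it to `g / c'` with `c' = max c 1`.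
  set c' := max c 1
  have hc' : 0 < c' := one_pos.trans_le (le_max_right c 1)
  have hh : ∀ z, |c'⁻¹ * g z| ≤ 1 := fun z => by
    rw [abs_mul, abs_inv, abs_of_pos hc', inv_mul_le_one₀ hc']
    exact (hgc z).trans (le_max_left c 1)
  have key := (integral_condExp (F.le n)).symm.trans
    (integral_congr_ae (hMarkov _ (hg.const_mul c'⁻¹) hh n))
  simp only [Pop_const_mul, integral_const_mul] at key
  exact mul_left_cancel₀ (inv_ne_zero hc'.ne') key

variable [IsMarkovKernel P] [IsProbabilityMeasure μ]

lemma integral_comp_eq_Pn (z0 : Z) (hΦ0 : ∀ ω, Φ 0 ω = z0)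
    (hMarkov : ∀ (g : Z → ℝ), Measurable g → (∀ z, |g z| ≤ 1) → ∀ n,
      μ[(fun ω => g (Φ (n + 1) ω)) | F n] =ᵐ[μ] fun ω => Pop P g (Φ n ω))
    {g : Z → ℝ} {c : ℝ} (hg : Measurable g) (hgc : ∀ z, |g z| ≤ c) (n : ℕ) :
    ∫ ω, g (Φ n ω) ∂μ = Pn P n g z0 := by
  induction n generalizing g with
  | zero => simp only [hΦ0, integral_const, probReal_univ, one_smul]; rfl
  | succ n ih =>
    rw [integral_comp_succ_eq_integral_Pop hMarkov hg hgc, Pn_succ',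
      ih (measurable_Pop hg) (abs_Pop_le hgc)]

/-- Truncating `f²` at level `M` gives bounded functions, to which the Markov property applies;
`V`-uniform ergodicity bounds `Pⁿ` of them uniformly in `n` and `M`. -/
lemma exists_eLpNorm_comp_le_of_VUniformlyErgodic {π : Measure Z} {V : Z → ℝ}
    (herg : VUniformlyErgodic P π V) (hadapted : ∀ n, Measurable[F n] (Φ n))
    (z0 : Z) (hΦ0 : ∀ ω, Φ 0 ω = z0)
    (hMarkov : ∀ (g : Z → ℝ), Measurable g → (∀ z, |g z| ≤ 1) → ∀ n,
      μ[(fun ω => g (Φ (n + 1) ω)) | F n] =ᵐ[μ] fun ω => Pop P g (Φ n ω))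
    {f : Z → ℝ} (hf : Measurable f) (hfV : BddV V fun z => f z ^ 2) :
    ∃ K : ℝ≥0, ∀ n, eLpNorm (fun ω => f (Φ n ω)) 2 μ ≤ K := by
  obtain ⟨B, hB⟩ := herg.exists_Pn_le
  obtain ⟨C, hC⟩ := hfV
  refine ⟨(√(f z0 ^ 2 + 2 * B * C * V z0)).toNNReal, fun n =>
    eLpNorm_two_le_of_integral_min_sq_le (f := fun ω => f (Φ n ω))
      (hf.comp ((hadapted n).mono (F.le n) le_rfl)) fun M => ?_⟩
  have hg : Measurable fun z => min (f z ^ 2) (M : ℝ) := (hf.pow_const 2).min measurable_const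
  have hg0 (z : Z) : 0 ≤ min (f z ^ 2) (M : ℝ) := le_min (sq_nonneg _) M.cast_nonneg
  have hgM (z : Z) : |min (f z ^ 2) (M : ℝ)| ≤ M := by
    rw [abs_of_nonneg (hg0 z)]; exact min_le_right _ _
  have hgV (z : Z) : |min (f z ^ 2) (M : ℝ)| ≤ C * V z := by
    rw [abs_of_nonneg (hg0 z)]; exact (min_le_left _ _).trans ((le_abs_self _).trans (hC z))
  rw [integral_comp_eq_Pn z0 hΦ0 hMarkov hg hgM]
  linarith [hB _ C hg hgV n z0, min_le_left (f z0 ^ 2) (M : ℝ)]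

end MarkovChain

section LeftEigenvector

variable {d : ℕ} {A : Matrix (Fin d) (Fin d) ℝ} {v : Fin d → ℂ} {lam : ℂ}

lemma sum_mul_ofReal_mulVec (heig : v ᵥ* A.map Complex.ofReal = lam • v) (x : Fin d → ℝ) :
    ∑ i, v i * ((A *ᵥ x) i : ℂ) = lam * ∑ i, v i * (x i : ℂ) := by
  have hmap : (fun i => ((A *ᵥ x) i : ℂ)) = A.map Complex.ofReal *ᵥ fun i => (x i : ℂ) :=
    funext fun i => RingHom.map_mulVec Complex.ofRealHom A x i
  change v ⬝ᵥ (fun i => ((A *ᵥ x) i : ℂ)) = lam * v ⬝ᵥ fun i => (x i : ℂ)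
  rw [hmap, dotProduct_mulVec, heig, smul_dotProduct, smul_eq_mul]

lemma sum_mul_ofReal_of_recursion (heig : v ᵥ* A.map Complex.ofReal = lam • v)
    {x x' y : Fin d → ℝ} {n : ℕ} (hn : 1 ≤ n)
    (h : x' = x + ((n : ℝ) + 1)⁻¹ • (A *ᵥ x - (n : ℝ)⁻¹ • ((1 + A) *ᵥ y))) :
    ∑ i, v i * (x' i : ℂ) = (1 + lam / (n + 1)) * ∑ i, v i * (x i : ℂ)
      - (1 + lam) / (n * (n + 1)) * ∑ i, v i * (y i : ℂ) := by
  let ℓ : (Fin d → ℝ) →ₗ[ℝ] ℂ :=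
    { toFun := fun x => ∑ i, v i * (x i : ℂ)
      map_add' := fun x y => by simp [mul_add, Finset.sum_add_distrib]
      map_smul' := fun c x => by simp [Finset.mul_sum, mul_left_comm] }
  have hℓA (x : Fin d → ℝ) : ℓ (A *ᵥ x) = lam * ℓ x := sum_mul_ofReal_mulVec heig x
  change ℓ x' = (1 + lam / (n + 1)) * ℓ x - (1 + lam) / (n * (n + 1)) * ℓ y
  have hn0 : (n : ℂ) ≠ 0 := Nat.cast_ne_zero.2 (by omega)
  have hn1 : (n : ℂ) + 1 ≠ 0 := Nat.cast_add_one_ne_zero n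
  rw [h, Matrix.add_mulVec, Matrix.one_mulVec]
  simp only [map_add, map_sub, map_smul, hℓA, Complex.real_smul]
  push_cast
  field_simp
  ring

end LeftEigenvector

section SecondMoments

variable {Ω : Type*} [MeasurableSpace Ω] {μ : Measure Ω}

lemma eLpNorm_sum_mul_le {ι : Type*} (s : Finset ι) (a : ι → ℂ) {S : ι → Ω → ℂ} {p : ℝ≥0∞}
    (hp : 1 ≤ p) {C : ℝ≥0} (hS : ∀ k ∈ s, AEStronglyMeasurable (S k) μ)
    (hC : ∀ k ∈ s, eLpNorm (S k) p μ ≤ C) :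
    eLpNorm (fun ω => ∑ k ∈ s, a k * S k ω) p μ ≤ ((∑ k ∈ s, ‖a k‖₊) * C : ℝ≥0) := by
  have hfun : (fun ω => ∑ k ∈ s, a k * S k ω) = ∑ k ∈ s, a k • S k := by
    ext ω; simp
  rw [hfun, ENNReal.coe_mul, ENNReal.ofNNReal_finsetSum, Finset.sum_mul]
  refine (eLpNorm_sum_le (fun k hk => (hS k hk).const_smul _) hp).trans
    (Finset.sum_le_sum fun k hk => ?_)
  rw [eLpNorm_const_smul, enorm_eq_nnnorm]
  exact mul_le_mul' le_rfl (hC k hk)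

lemma integral_norm_sq_le_of_eLpNorm_le {G : Ω → ℂ} (hG : AEStronglyMeasurable G μ) {C : ℝ≥0}
    (hC : eLpNorm G 2 μ ≤ C) : ∫ ω, ‖G ω‖ ^ 2 ∂μ ≤ (C : ℝ) ^ 2 := by
  rw [integral_eq_lintegral_of_nonneg_ae (ae_of_all _ fun ω => sq_nonneg _)
    (hG.norm.pow 2)]
  have hlint : ∫⁻ ω, ENNReal.ofReal (‖G ω‖ ^ 2) ∂μ = eLpNorm G 2 μ ^ (2 : ℝ) := by
    rw [eLpNorm_eq_lintegral_rpow_enorm_toReal two_ne_zero ENNReal.ofNat_ne_top,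
      ← ENNReal.rpow_mul]
    simp_rw [← ofReal_norm, ENNReal.ofReal_pow (norm_nonneg _)]
    norm_num
  rw [hlint]
  calc (eLpNorm G 2 μ ^ (2 : ℝ)).toReal ≤ ((C : ℝ≥0∞) ^ (2 : ℝ)).toReal :=
        ENNReal.toReal_mono (by simp) (ENNReal.rpow_le_rpow hC zero_le_two)
    _ = (C : ℝ) ^ 2 := by simp

lemma exists_eLpNorm_sum_mul_ofReal_le {ι : Type*} [Fintype ι] (v : ι → ℂ)
    {X : ℕ → ι → Ω → ℝ} (hX : ∀ k i, AEStronglyMeasurable (X k i) μ)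
    (hK : ∀ i, ∃ K : ℝ≥0, ∀ k, eLpNorm (X k i) 2 μ ≤ K) :
    ∃ C : ℝ≥0, ∀ k, eLpNorm (fun ω => ∑ i, v i * (X k i ω : ℂ)) 2 μ ≤ C := by
  choose K hK using hK
  refine ⟨(∑ i, ‖v i‖₊) * ∑ i, K i, fun k => eLpNorm_sum_mul_le _ _ one_le_two
    (fun i _ => Complex.continuous_ofReal.comp_aestronglyMeasurable (hX k i)) fun i _ => ?_⟩
  rw [eLpNorm_congr_norm_ae (ae_of_all _ fun ω => Complex.norm_real (X k i ω))]
  exact (hK i k).trans (ENNReal.coe_le_coe.2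
    (Finset.single_le_sum (fun j _ => bot_le) (Finset.mem_univ i)))

lemma rpow_mul_integral_norm_sq_sum_le {S : ℕ → Ω → ℂ} (hS : ∀ k, AEStronglyMeasurable (S k) μ)
    {C : ℝ≥0} (hC : ∀ k, eLpNorm (S k) 2 μ ≤ C) (s : Finset ℕ) (a : ℕ → ℂ) {ϱ R : ℝ}
    (hϱ : 0 ≤ ϱ) {n : ℕ} (hR : ((n : ℝ) + 1) ^ ϱ * ∑ k ∈ s, ‖a k‖ ≤ R) :
    (n : ℝ) ^ (2 * ϱ) * ∫ ω, ‖∑ k ∈ s, a k * S k ω‖ ^ 2 ∂μ ≤ R ^ 2 * (C : ℝ) ^ 2 := by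
  have hL2 := integral_norm_sq_le_of_eLpNorm_le
    (Finset.aestronglyMeasurable_fun_sum s fun k _ => (hS k).const_mul (a k))
    (eLpNorm_sum_mul_le s a one_le_two (fun k _ => hS k) fun k _ => hC k)
  push_cast at hL2
  have hn : (n : ℝ) ^ (2 * ϱ) ≤ (((n : ℝ) + 1) ^ ϱ) ^ 2 := by
    rw [← Real.rpow_natCast, ← Real.rpow_mul (by positivity), mul_comm]
    exact Real.rpow_le_rpow n.cast_nonneg (by linarith) (by positivity)
  calc (n : ℝ) ^ (2 * ϱ) * ∫ ω, ‖∑ k ∈ s, a k * S k ω‖ ^ 2 ∂μ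
      ≤ (((n : ℝ) + 1) ^ ϱ) ^ 2 * ((∑ k ∈ s, ‖a k‖) * C) ^ 2 :=
        mul_le_mul hn hL2 (integral_nonneg fun _ => by positivity) (by positivity)
    _ = (((n : ℝ) + 1) ^ ϱ * ∑ k ∈ s, ‖a k‖) ^ 2 * (C : ℝ) ^ 2 := by ring
    _ ≤ R ^ 2 * (C : ℝ) ^ 2 :=
        mul_le_mul_of_nonneg_right (pow_le_pow_left₀ (by positivity) hR 2) (by positivity)

end SecondMoments

open Finset in
lemma log_div_le_sum_Ioc_inv {k n : ℕ} (hkn : k ≤ n) :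
    Real.log ((n + 1) / (k + 1)) ≤ ∑ j ∈ Ioc k n, (j : ℝ)⁻¹ := by
  have h0 : (0 : ℝ) ∉ Set.uIcc ((k + 1 : ℕ) : ℝ) ((n + 1 : ℕ) : ℝ) := by
    rw [Set.uIcc_of_le (by exact_mod_cast Nat.succ_le_succ hkn)]
    exact fun h => (Nat.cast_add_one_pos (α := ℝ) k).not_ge (by exact_mod_cast h.1)
  calc Real.log ((n + 1) / (k + 1)) = ∫ x in ((k + 1 : ℕ) : ℝ)..((n + 1 : ℕ) : ℝ), x⁻¹ := by
        rw [integral_inv h0]; push_cast; rfl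
    _ ≤ ∑ j ∈ Ico (k + 1) (n + 1), (j : ℝ)⁻¹ :=
        (inv_antitoneOn_Icc_right (by positivity)).integral_le_sum_Ico (by omega)
    _ = ∑ j ∈ Ioc k n, (j : ℝ)⁻¹ := by rw [Ico_add_one_add_one_eq_Ioc]

open Finset in
lemma sum_Ioc_inv_sq_le_two (k n : ℕ) : ∑ j ∈ Ioc k n, ((j : ℝ) ^ 2)⁻¹ ≤ 2 := by
  rw [← Ioo_add_one_right_eq_Ioc]
  refine (sum_Ioo_inv_sq_le k (n + 1)).trans ?_
  rw [div_le_iff₀ (by positivity)]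
  linarith [(k.cast_nonneg : (0 : ℝ) ≤ k)]

lemma norm_one_add_le_exp (z : ℂ) : ‖1 + z‖ ≤ Real.exp (z.re + ‖z‖ ^ 2 / 2) := by
  have hsq : ‖1 + z‖ ^ 2 = 1 + (2 * z.re + ‖z‖ ^ 2) := by
    rw [Complex.sq_norm, Complex.sq_norm, Complex.normSq_apply, Complex.normSq_apply]
    simp only [Complex.add_re, Complex.one_re, Complex.add_im, Complex.one_im]
    ring
  refine (pow_le_pow_iff_left₀ (norm_nonneg _) (Real.exp_pos _).le two_ne_zero).1 ?_
  rw [hsq, sq (Real.exp _), ← Real.exp_add,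
    show z.re + ‖z‖ ^ 2 / 2 + (z.re + ‖z‖ ^ 2 / 2) = 2 * z.re + ‖z‖ ^ 2 by ring]
  linarith [Real.add_one_le_exp (2 * z.re + ‖z‖ ^ 2)]

/-- Propagates the homogeneous recursion `W_j = (1 + λ/j) W_{j-1}` from time `k` to time `n`. -/
def propagator (lam : ℂ) (n k : ℕ) : ℂ := ∏ j ∈ Finset.Ioc k n, (1 + lam / j)

/-- In `W_1 = S_1`, `W_{n+1} = (1 + λ/(n+1)) W_n - (1 + λ)/(n (n+1)) S_{n+1}`, the input `S_k`
enters `W_n` with weight `propagator λ n k * inputWeight λ k`. -/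
def inputWeight (lam : ℂ) (k : ℕ) : ℂ := if k = 1 then 1 else -((1 + lam) / ((k - 1) * k))

lemma eq_sum_propagator_of_recursion {lam : ℂ} {W S : ℕ → ℂ} (h1 : W 1 = S 1)
    (hrec : ∀ n : ℕ, 1 ≤ n →
      W (n + 1) = (1 + lam / (n + 1)) * W n - (1 + lam) / (n * (n + 1)) * S (n + 1))
    {n : ℕ} (hn : 1 ≤ n) :
    W n = ∑ k ∈ Finset.Icc 1 n, propagator lam n k * inputWeight lam k * S k := by
  induction n, hn using Nat.le_induction with
  | base => simp [propagator, inputWeight, h1]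
  | succ n hn ih =>
    have hprop : ∀ k ∈ Finset.Icc 1 n,
        propagator lam (n + 1) k = (1 + lam / (n + 1)) * propagator lam n k := fun k hk => by
      rw [propagator, propagator, Finset.prod_Ioc_succ_top (Finset.mem_Icc.1 hk).2, mul_comm]
      push_cast; rfl
    have hweight : inputWeight lam (n + 1) = -((1 + lam) / (n * (n + 1))) := by
      simp [inputWeight, Nat.one_le_iff_ne_zero.1 hn]
    rw [Finset.sum_Icc_succ_top (by omega), Finset.sum_congr rfl fun k hk => by rw [hprop k hk],
      hrec n hn, ih, hweight]
    simp only [propagator, Finset.Ioc_self, Finset.prod_empty, mul_assoc, ← Finset.mul_sum]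
    ring

lemma norm_propagator_le {lam : ℂ} (hlam : lam.re ≤ 0) {k n : ℕ} (hkn : k ≤ n) :
    ‖propagator lam n k‖ ≤ Real.exp (‖lam‖ ^ 2) * ((k + 1) / (n + 1)) ^ (-lam.re) := by
  have hterm (j : ℕ) : ‖1 + lam / j‖ ≤
      Real.exp (lam.re * (j : ℝ)⁻¹ + ‖lam‖ ^ 2 / 2 * ((j : ℝ) ^ 2)⁻¹) := by
    refine (norm_one_add_le_exp _).trans_eq (congrArg Real.exp ?_)
    rw [Complex.div_natCast_re, norm_div, Complex.norm_natCast]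
    ring
  have hsum : ∑ j ∈ Finset.Ioc k n, (lam.re * (j : ℝ)⁻¹ + ‖lam‖ ^ 2 / 2 * ((j : ℝ) ^ 2)⁻¹)
      ≤ lam.re * Real.log ((n + 1) / (k + 1)) + ‖lam‖ ^ 2 := by
    rw [Finset.sum_add_distrib, ← Finset.mul_sum, ← Finset.mul_sum]
    nlinarith [log_div_le_sum_Ioc_inv hkn, sum_Ioc_inv_sq_le_two k n,
      mul_le_mul_of_nonpos_left (log_div_le_sum_Ioc_inv hkn) hlam, sq_nonneg ‖lam‖]
  have hrpow : ((k + 1 : ℝ) / (n + 1)) ^ (-lam.re) =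
      Real.exp (lam.re * Real.log ((n + 1) / (k + 1))) := by
    rw [Real.rpow_def_of_pos (by positivity), Real.log_div (by positivity) (by positivity),
      Real.log_div (by positivity) (by positivity)]
    ring_nf
  calc ‖propagator lam n k‖ = ∏ j ∈ Finset.Ioc k n, ‖1 + lam / j‖ := norm_prod _ _
    _ ≤ ∏ j ∈ Finset.Ioc k n,
          Real.exp (lam.re * (j : ℝ)⁻¹ + ‖lam‖ ^ 2 / 2 * ((j : ℝ) ^ 2)⁻¹) :=
        Finset.prod_le_prod (fun _ _ => norm_nonneg _) fun j _ => hterm j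
    _ ≤ Real.exp (lam.re * Real.log ((n + 1) / (k + 1)) + ‖lam‖ ^ 2) := by
        rw [← Real.exp_sum]; exact Real.exp_le_exp.2 hsum
    _ = _ := by rw [hrpow, ← Real.exp_add, add_comm]

lemma norm_inputWeight_le {lam : ℂ} {k : ℕ} (hk : 2 ≤ k) :
    ‖inputWeight lam k‖ ≤ 2 * ‖1 + lam‖ / (k : ℝ) ^ 2 := by
  have hk' : (2 : ℝ) ≤ k := by exact_mod_cast hk
  have hden : ((k : ℂ) - 1) * k = (((k - 1) * k : ℝ) : ℂ) := by push_cast; ring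
  rw [inputWeight, if_neg (by omega), norm_neg, norm_div, hden, Complex.norm_real,
    Real.norm_of_nonneg (by nlinarith), div_le_div_iff₀ (by nlinarith) (by positivity)]
  nlinarith [mul_nonneg (norm_nonneg (1 + lam))
    (mul_nonneg (by linarith : (0 : ℝ) ≤ k - 2) k.cast_nonneg)]

lemma summable_rpow_mul_norm_inputWeight (lam : ℂ) {ϱ : ℝ} (hϱ0 : 0 ≤ ϱ) (hϱ1 : ϱ < 1) :
    Summable fun k : ℕ => ((k : ℝ) + 1) ^ ϱ * ‖inputWeight lam k‖ := by
  refine Summable.of_norm_bounded_eventually_nat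
    ((Real.summable_nat_rpow.2 (by linarith : ϱ - 2 < -1)).mul_left (4 * ‖1 + lam‖)) ?_
  filter_upwards [eventually_ge_atTop 2] with k hk
  have hk' : (2 : ℝ) ≤ k := by exact_mod_cast hk
  have hsucc : ((k : ℝ) + 1) ^ ϱ ≤ 2 * (k : ℝ) ^ ϱ :=
    calc ((k : ℝ) + 1) ^ ϱ ≤ (2 * k) ^ ϱ := Real.rpow_le_rpow (by positivity) (by linarith) hϱ0
      _ = 2 ^ ϱ * (k : ℝ) ^ ϱ := Real.mul_rpow zero_le_two k.cast_nonneg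
      _ ≤ 2 * (k : ℝ) ^ ϱ := by
        gcongr; simpa using Real.rpow_le_rpow_of_exponent_le one_le_two hϱ1.le
  have hpow : (k : ℝ) ^ ϱ / (k : ℝ) ^ 2 = (k : ℝ) ^ (ϱ - 2) := by
    rw [Real.rpow_sub (by positivity), Real.rpow_two]
  rw [Real.norm_of_nonneg (by positivity)]
  calc ((k : ℝ) + 1) ^ ϱ * ‖inputWeight lam k‖
      ≤ (2 * (k : ℝ) ^ ϱ) * (2 * ‖1 + lam‖ / (k : ℝ) ^ 2) :=
        mul_le_mul hsucc (norm_inputWeight_le hk) (norm_nonneg _) (by positivity)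
    _ = 4 * ‖1 + lam‖ * (k : ℝ) ^ (ϱ - 2) := by rw [← hpow]; ring

lemma rpow_mul_sum_norm_propagator_mul_inputWeight_le {lam : ℂ} (hlam0 : lam.re ≤ 0)
    (hlam1 : -1 < lam.re) (n : ℕ) :
    ((n : ℝ) + 1) ^ (-lam.re) *
        ∑ k ∈ Finset.Icc 1 n, ‖propagator lam n k * inputWeight lam k‖ ≤
      Real.exp (‖lam‖ ^ 2) * ∑' k : ℕ, ((k : ℝ) + 1) ^ (-lam.re) * ‖inputWeight lam k‖ := by
  have hsum := summable_rpow_mul_norm_inputWeight lam (neg_nonneg.2 hlam0) (by linarith)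
  rw [Finset.mul_sum]
  calc ∑ k ∈ Finset.Icc 1 n, ((n : ℝ) + 1) ^ (-lam.re) * ‖propagator lam n k * inputWeight lam k‖
      ≤ ∑ k ∈ Finset.Icc 1 n,
          Real.exp (‖lam‖ ^ 2) * (((k : ℝ) + 1) ^ (-lam.re) * ‖inputWeight lam k‖) := by
        refine Finset.sum_le_sum fun k hk => ?_
        have hprop := norm_propagator_le hlam0 (Finset.mem_Icc.1 hk).2
        rw [Real.div_rpow (by positivity) (by positivity)] at hprop
        have hn : (0 : ℝ) < ((n : ℝ) + 1) ^ (-lam.re) := by positivity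
        rw [norm_mul]
        calc ((n : ℝ) + 1) ^ (-lam.re) * (‖propagator lam n k‖ * ‖inputWeight lam k‖)
            ≤ ((n : ℝ) + 1) ^ (-lam.re) * (Real.exp (‖lam‖ ^ 2) *
                (((k : ℝ) + 1) ^ (-lam.re) / ((n : ℝ) + 1) ^ (-lam.re)) * ‖inputWeight lam k‖) := by
              gcongr
          _ = _ := by field_simp
    _ ≤ _ := by
        rw [← Finset.mul_sum]
        exact mul_le_mul_of_nonneg_left
          (hsum.sum_le_tsum _ fun k _ => by positivity) (Real.exp_pos _).le

theorem stmt13_general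
    {Z : Type*} [MeasurableSpace Z] (P : Kernel Z Z) [IsMarkovKernel P]
    (π : Measure Z)
    (V : Z → ℝ)
    (herg : VUniformlyErgodic P π V)
    {Ω : Type*} {m0 : MeasurableSpace Ω} (μ : Measure Ω) [IsProbabilityMeasure μ]
    (F : Filtration ℕ m0) (Φ : ℕ → Ω → Z)
    (hadapted : ∀ n, Measurable[F n] (Φ n))
    (z0 : Z) (hΦ0 : ∀ ω, Φ 0 ω = z0)
    (hMarkov : ∀ (g : Z → ℝ), Measurable g → (∀ z, |g z| ≤ 1) → ∀ n,
      μ[(fun ω => g (Φ (n + 1) ω)) | F n] =ᵐ[μ] fun ω => Pop P g (Φ n ω))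
    {d : ℕ} (A : Matrix (Fin d) (Fin d) ℝ)
    (fhat : Z → Fin d → ℝ) (hfhmeas : ∀ i, Measurable fun z => fhat z i)
    (hfhV : ∀ i, BddV V fun z => fhat z i ^ 2)
    (Xi : ℕ → Ω → Fin d → ℝ) (hXi1 : ∀ ω, Xi 1 ω = fhat (Φ 1 ω))
    (hXirec : ∀ n : ℕ, 1 ≤ n → ∀ ω, Xi (n + 1) ω = Xi n ω + ((n : ℝ) + 1)⁻¹ •
      (A.mulVec (Xi n ω) - ((n : ℝ))⁻¹ • ((1 + A).mulVec (fhat (Φ (n + 1) ω)))))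
    (ϱ0 u : ℝ) (hϱ0 : 0 < ϱ0) (hϱ0half : ϱ0 < 1 / 2)
    (v : Fin d → ℂ)
    (heig : Matrix.vecMul v (A.map Complex.ofReal)
      = (Complex.ofReal (-ϱ0) + Complex.ofReal u * Complex.I) • v) :
    IsBoundedUnder (· ≤ ·) atTop (fun n : ℕ =>
      (n : ℝ) ^ (2 * ϱ0) * ∫ ω, ‖∑ i, v i * (Xi n ω i : ℂ)‖ ^ 2 ∂μ) := by
  set lam : ℂ := Complex.ofReal (-ϱ0) + Complex.ofReal u * Complex.I
  have hlam : lam.re = -ϱ0 := by simp [lam]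
  have hfhΦ (k : ℕ) (i : Fin d) : Measurable fun ω => fhat (Φ k ω) i :=
    (hfhmeas i).comp ((hadapted k).mono (F.le k) le_rfl)
  set S : ℕ → Ω → ℂ := fun k ω => ∑ i, v i * (fhat (Φ k ω) i : ℂ)
  have hS (k : ℕ) : AEStronglyMeasurable (S k) μ :=
    (Finset.measurable_sum _ fun i _ =>
      measurable_const.mul (Complex.measurable_ofReal.comp (hfhΦ k i))).aestronglyMeasurable
  have hK := fun i => exists_eLpNorm_comp_le_of_VUniformlyErgodic herg hadapted z0 hΦ0 hMarkov
    (hfhmeas i) (hfhV i)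
  obtain ⟨C, hC⟩ := exists_eLpNorm_sum_mul_ofReal_le v
    (X := fun k i ω => fhat (Φ k ω) i) (fun k i => (hfhΦ k i).aestronglyMeasurable) hK
  have hW {n : ℕ} (hn : 1 ≤ n) (ω : Ω) : ∑ i, v i * (Xi n ω i : ℂ) =
      ∑ k ∈ Finset.Icc 1 n, propagator lam n k * inputWeight lam k * S k ω :=
    eq_sum_propagator_of_recursion (W := fun n => ∑ i, v i * (Xi n ω i : ℂ))
      (by simp [S, hXi1]) (fun n hn => sum_mul_ofReal_of_recursion heig hn (hXirec n hn ω)) hn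
  obtain ⟨R, hR⟩ : ∃ R, ∀ n : ℕ, ((n : ℝ) + 1) ^ ϱ0 *
      ∑ k ∈ Finset.Icc 1 n, ‖propagator lam n k * inputWeight lam k‖ ≤ R := by
    have hbound := rpow_mul_sum_norm_propagator_mul_inputWeight_le (lam := lam) (by linarith)
      (by linarith)
    rw [hlam, neg_neg] at hbound
    exact ⟨_, hbound⟩
  refine isBoundedUnder_of_eventually_le (a := R ^ 2 * (C : ℝ) ^ 2) ?_
  filter_upwards [eventually_ge_atTop 1] with n hn
  simp only [hW hn]
  exact rpow_mul_integral_norm_sq_sum_le hS hC _ _ hϱ0.le (hR n)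

theorem stmt13
    {Z : Type*} [MeasurableSpace Z] (P : Kernel Z Z) [IsMarkovKernel P]
    (π : Measure Z) [IsProbabilityMeasure π]
    (hinv : π.bind (fun z => P z) = π)
    (huniq : ∀ π' : Measure Z, IsProbabilityMeasure π' → π'.bind (fun z => P z) = π' → π' = π)
    (V : Z → ℝ) (hVmeas : Measurable V) (hV1 : ∀ z, 1 ≤ V z)
    (herg : VUniformlyErgodic P π V)
    {Ω : Type*} {m0 : MeasurableSpace Ω} (μ : Measure Ω) [IsProbabilityMeasure μ]
    (F : Filtration ℕ m0) (Φ : ℕ → Ω → Z)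
    (hadapted : ∀ n, Measurable[F n] (Φ n))
    (z0 : Z) (hΦ0 : ∀ ω, Φ 0 ω = z0)
    (hMarkov : ∀ (g : Z → ℝ), Measurable g → (∀ z, |g z| ≤ 1) → ∀ n,
      μ[(fun ω => g (Φ (n + 1) ω)) | F n] =ᵐ[μ] fun ω => Pop P g (Φ n ω))
    {d : ℕ} (A : Matrix (Fin d) (Fin d) ℝ) (hA : IsHurwitz A)
    (fstar : Z → Fin d → ℝ) (hfmeas : ∀ i, Measurable fun z => fstar z i)
    (hfV : ∀ i, BddV V fun z => fstar z i ^ 2)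
    (hfmean : ∀ i, ∫ z, fstar z i ∂π = 0)
    (fhat : Z → Fin d → ℝ) (hfhmeas : ∀ i, Measurable fun z => fhat z i)
    (hfhV : ∀ i, BddV V fun z => fhat z i ^ 2)
    (hfhmean : ∀ i, ∫ z, fhat z i ∂π = 0)
    (hPoisson : ∀ z i, Pop P (fun y => fhat y i) z = fhat z i - fstar z i)
    (Xi : ℕ → Ω → Fin d → ℝ) (hXi1 : ∀ ω, Xi 1 ω = fhat (Φ 1 ω))
    (hXirec : ∀ n : ℕ, 1 ≤ n → ∀ ω, Xi (n + 1) ω = Xi n ω + ((n : ℝ) + 1)⁻¹ •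
      (A.mulVec (Xi n ω) - ((n : ℝ))⁻¹ • ((1 + A).mulVec (fhat (Φ (n + 1) ω)))))
    (ϱ0 u : ℝ) (hϱ0 : 0 < ϱ0) (hϱ0half : ϱ0 < 1 / 2)
    (v : Fin d → ℂ) (hv : v ≠ 0)
    (heig : Matrix.vecMul v (A.map Complex.ofReal)
      = (Complex.ofReal (-ϱ0) + Complex.ofReal u * Complex.I) • v)
    (hSv : ((SigmaDelta P π fhat).map Complex.ofReal).mulVec v ≠ 0) :
    IsBoundedUnder (· ≤ ·) atTop (fun n : ℕ =>
      (n : ℝ) ^ (2 * ϱ0) * ∫ ω, ‖∑ i, v i * (Xi n ω i : ℂ)‖ ^ 2 ∂μ) :=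
  stmt13_general P π V herg μ F Φ hadapted z0 hΦ0 hMarkov A fhat hfhmeas hfhV Xi hXi1 hXirec ϱ0 u
    hϱ0 hϱ0half v heig
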